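/- arXiv:2407.04264 — 2 statements merged into one kernel-verified Lean document; each statement's English description precedes it below -/
import Mathlib

section
/- Let Φ : ℝ^d → ℝ be nonnegative and three-times differentiable, and suppose there is an increasing function ρ : [0,∞) → [0,∞) with ρ ≥ max(ρ₁, ρ₁³, ρ₂, ρ₃, ρ₁ρ₂) pointwise, where ‖∇^kΦ(w)‖_op ≤ ρ_k(Φ(w)) for k = 1,2,3, and ρ(z) = 2A(z+1)^p. Define θ by θ'(z) = 1/ρ(z), θ(0)=0. Then for all w, u ∈ ℝ^d: θ(Φ(w+u)) ≤ θ(Φ(w)) + θ'(Φ(w))⟨∇Φ(w), u⟩ + (1/2)θ'(Φ(w))⟨∇²Φ(w)u, u⟩ + (C/6)‖u‖³, where C = p² + 4p + 1. -/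
/-!
Restrict to the line `t ↦ w + t • u` and put `l t = θ (Φ (w + t • u))`. Since `ρ'/ρ = p/(z+1)`,
the derivatives of `θ' = 1/ρ` are `θ'' = -p/((z+1)ρ)` and `θ''' = p(p+1)/((z+1)²ρ)`, so in
`l''' = θ''' D₁³ + 3 θ'' D₁ D₂ + θ' D₃` (`Dₖ` the `k`-th directional derivative of `Φ`) the weights
times `ρ(Φ)` are at most `p(p+1)`, `p` and `1`, while self-bounding regularity bounds `|D₁|³`,
`|D₁ D₂|` and `|D₃|` by `ρ(Φ) ‖u‖³`. Hence `l''' ≤ (p²+4p+1)‖u‖³`, and the third-order Taylor bound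
for `l` on `[0,1]` gives the claim once the nonpositive term `θ''(Φ w) D₁² / 2` is dropped.
-/

open Set

lemma le_of_hasDerivAt_le_of_le {f f' g g' : ℝ → ℝ} {a b : ℝ}
    (hf : ∀ x ∈ Icc a b, HasDerivAt f (f' x) x) (hg : ∀ x ∈ Icc a b, HasDerivAt g (g' x) x)
    (ha : f a ≤ g a) (hle : ∀ x ∈ Icc a b, f' x ≤ g' x) : ∀ x ∈ Icc a b, f x ≤ g x :=
  fun _ hx => image_le_of_deriv_right_le_deriv_boundary
    (fun x hx => (hf x hx).continuousAt.continuousWithinAt)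
    (fun x hx => (hf x (Ico_subset_Icc_self hx)).hasDerivWithinAt) ha
    (fun x hx => (hg x hx).continuousAt.continuousWithinAt)
    (fun x hx => (hg x (Ico_subset_Icc_self hx)).hasDerivWithinAt)
    (fun x hx => hle x (Ico_subset_Icc_self hx)) hx

lemma taylor_third_order_le {f f₁ f₂ f₃ : ℝ → ℝ} {a b M : ℝ} (hab : a ≤ b)
    (hf : ∀ x ∈ Icc a b, HasDerivAt f (f₁ x) x)
    (hf₁ : ∀ x ∈ Icc a b, HasDerivAt f₁ (f₂ x) x)
    (hf₂ : ∀ x ∈ Icc a b, HasDerivAt f₂ (f₃ x) x)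
    (hM : ∀ x ∈ Icc a b, f₃ x ≤ M) :
    f b ≤ f a + f₁ a * (b - a) + f₂ a / 2 * (b - a) ^ 2 + M / 6 * (b - a) ^ 3 := by
  have hlin (x : ℝ) : HasDerivAt (fun x => x - a) 1 x := (hasDerivAt_id' x).sub_const a
  have hpow (n : ℕ) (x : ℝ) : HasDerivAt (fun x => (x - a) ^ n) (n * (x - a) ^ (n - 1)) x := by
    simpa using (hlin x).fun_pow n
  have h₂ := le_of_hasDerivAt_le_of_le (g := fun x => f₂ a + M * (x - a)) hf₂
    (fun x _ => ((hlin x).const_mul M).const_add _) (by simp) (by simpa using hM)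
  have h₁ := le_of_hasDerivAt_le_of_le
    (g := fun x => f₁ a + f₂ a * (x - a) + M / 2 * (x - a) ^ 2) hf₁
    (fun x _ => (((hlin x).const_mul _).const_add _).add ((hpow 2 x).const_mul _)) (by simp)
    (fun x hx => by push_cast; linear_combination h₂ x hx)
  have h₀ := le_of_hasDerivAt_le_of_le
    (g := fun x => f a + f₁ a * (x - a) + f₂ a / 2 * (x - a) ^ 2 + M / 6 * (x - a) ^ 3) hf
    (fun x _ => ((((hlin x).const_mul _).const_add _).add ((hpow 2 x).const_mul _)).add
      ((hpow 3 x).const_mul _)) (by simp)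
    (fun x hx => by push_cast; linear_combination h₁ x hx)
  simpa using h₀ b (right_mem_Icc.2 hab)

lemma taylor_comp_third_order_le {φ φ₁ φ₂ φ₃ g g₁ g₂ g₃ : ℝ → ℝ} {M : ℝ}
    (hφ : ∀ t ∈ Icc (0 : ℝ) 1, HasDerivAt φ (φ₁ (g t)) (g t))
    (hφ₁ : ∀ t ∈ Icc (0 : ℝ) 1, HasDerivAt φ₁ (φ₂ (g t)) (g t))
    (hφ₂ : ∀ t ∈ Icc (0 : ℝ) 1, HasDerivAt φ₂ (φ₃ (g t)) (g t))
    (hg : ∀ t ∈ Icc (0 : ℝ) 1, HasDerivAt g (g₁ t) t)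
    (hg₁ : ∀ t ∈ Icc (0 : ℝ) 1, HasDerivAt g₁ (g₂ t) t)
    (hg₂ : ∀ t ∈ Icc (0 : ℝ) 1, HasDerivAt g₂ (g₃ t) t)
    (hM : ∀ t ∈ Icc (0 : ℝ) 1,
      φ₃ (g t) * g₁ t ^ 3 + 3 * φ₂ (g t) * g₁ t * g₂ t + φ₁ (g t) * g₃ t ≤ M) :
    φ (g 1) ≤ φ (g 0) + φ₁ (g 0) * g₁ 0 + (φ₂ (g 0) * g₁ 0 ^ 2 + φ₁ (g 0) * g₂ 0) / 2 + M / 6 := by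
  have hφ₁g (t) (ht : t ∈ Icc (0 : ℝ) 1) := (hφ₁ t ht).comp t (hg t ht)
  have hφ₂g (t) (ht : t ∈ Icc (0 : ℝ) 1) := (hφ₂ t ht).comp t (hg t ht)
  have := taylor_third_order_le zero_le_one (f := fun t => φ (g t))
    (f₁ := fun t => φ₁ (g t) * g₁ t) (f₂ := fun t => φ₂ (g t) * g₁ t ^ 2 + φ₁ (g t) * g₂ t)
    (fun t ht => (hφ t ht).comp t (hg t ht))
    (fun t ht => ((hφ₁g t ht).mul (hg₁ t ht)).congr_deriv (by simp only [Function.comp]; ring))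
    (fun t ht => (((hφ₂g t ht).mul ((hg₁ t ht).fun_pow 2)).add
      ((hφ₁g t ht).mul (hg₂ t ht))).congr_deriv (by simp only [Function.comp]; ring)) hM
  linear_combination this

lemma hasDerivAt_const_mul_add_one_rpow (c p : ℝ) {z : ℝ} (hz : 0 < z + 1) :
    HasDerivAt (fun x => c * (x + 1) ^ p) (p * (c * (z + 1) ^ p) / (z + 1)) z := by
  refine ((((hasDerivAt_id z).add_const 1).rpow_const (Or.inl hz.ne')).const_mul c).congr_deriv ?_
  simp only [id]
  rw [Real.rpow_sub_one hz.ne']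
  field_simp

section LogDerivative

variable {ρ : ℝ → ℝ} {p z : ℝ}

lemma hasDerivAt_one_div_of_logDeriv (hρ : HasDerivAt ρ (p * ρ z / (z + 1)) z)
    (hρz : ρ z ≠ 0) (hz : z + 1 ≠ 0) :
    HasDerivAt (fun x => 1 / ρ x) (-p / ((z + 1) * ρ z)) z :=
  ((hasDerivAt_const z 1).div hρ hρz).congr_deriv (by field_simp; ring)

lemma hasDerivAt_neg_div_mul_of_logDeriv (hρ : HasDerivAt ρ (p * ρ z / (z + 1)) z)
    (hρz : ρ z ≠ 0) (hz : z + 1 ≠ 0) :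
    HasDerivAt (fun x => -p / ((x + 1) * ρ x)) (p * (p + 1) / ((z + 1) ^ 2 * ρ z)) z :=
  ((hasDerivAt_const z (-p)).div (((hasDerivAt_id z).add_const 1).mul hρ)
    (mul_ne_zero hz hρz)).congr_deriv (by simp only [id, Pi.mul_apply]; field_simp; ring)

end LogDerivative

lemma weighted_third_order_le {R r₁ r₂ r₃ a b c p z ν : ℝ} (hR : 0 < R) (hp : 0 ≤ p)
    (hz : 0 ≤ z) (hν : 0 ≤ ν) (hr₁ : 0 ≤ r₁) (ha : |a| ≤ r₁ * ν) (hb : |b| ≤ r₂ * ν ^ 2)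
    (hc : |c| ≤ r₃ * ν ^ 3) (hr₁R : r₁ ^ 3 ≤ R) (hr₁₂R : r₁ * r₂ ≤ R) (hr₃R : r₃ ≤ R) :
    p * (p + 1) / ((z + 1) ^ 2 * R) * a ^ 3 + 3 * (-p / ((z + 1) * R)) * a * b + 1 / R * c
      ≤ (p ^ 2 + 4 * p + 1) * ν ^ 3 := by
  have hν₃ : 0 ≤ ν ^ 3 := by positivity
  have ha₃ : a ^ 3 / R ≤ ν ^ 3 := by
    rw [div_le_iff₀ hR]
    calc a ^ 3 ≤ |a| ^ 3 := by rw [← abs_pow]; exact le_abs_self _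
      _ ≤ (r₁ * ν) ^ 3 := by gcongr
      _ = r₁ ^ 3 * ν ^ 3 := by ring
      _ ≤ ν ^ 3 * R := by nlinarith
  have hab : -(a * b) / R ≤ ν ^ 3 := by
    rw [div_le_iff₀ hR]
    calc -(a * b) ≤ |a| * |b| := by rw [← abs_mul]; exact neg_le_abs _
      _ ≤ (r₁ * ν) * (r₂ * ν ^ 2) := by gcongr
      _ = r₁ * r₂ * ν ^ 3 := by ring
      _ ≤ ν ^ 3 * R := by nlinarith
  have hc' : c / R ≤ ν ^ 3 := by
    rw [div_le_iff₀ hR]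
    nlinarith [le_abs_self c]
  have hs₁ : 1 / (z + 1) ≤ 1 := by rw [div_le_one (by linarith)]; linarith
  have hs₂ : 1 / (z + 1) ^ 2 ≤ 1 := by rw [div_le_one (by positivity)]; nlinarith
  calc p * (p + 1) / ((z + 1) ^ 2 * R) * a ^ 3 + 3 * (-p / ((z + 1) * R)) * a * b + 1 / R * c
      = p * (p + 1) * (1 / (z + 1) ^ 2) * (a ^ 3 / R) + 3 * p * (1 / (z + 1)) * (-(a * b) / R)
        + c / R := by field_simp
    _ ≤ p * (p + 1) * (1 / (z + 1) ^ 2) * ν ^ 3 + 3 * p * (1 / (z + 1)) * ν ^ 3 + ν ^ 3 := by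
      gcongr
    _ ≤ p * (p + 1) * 1 * ν ^ 3 + 3 * p * 1 * ν ^ 3 + ν ^ 3 := by gcongr
    _ = (p ^ 2 + 4 * p + 1) * ν ^ 3 := by ring

section IteratedFDerivLine

variable {E F : Type*} [NormedAddCommGroup E] [NormedSpace ℝ E] [NormedAddCommGroup F]
  [NormedSpace ℝ F] {f : E → F}

theorem ContDiff.hasDerivAt_iteratedFDeriv_add_smul {n : ℕ} (hf : ContDiff ℝ (n + 1) f)
    (x y : E) (t : ℝ) :
    HasDerivAt (fun s : ℝ => iteratedFDeriv ℝ n f (x + s • y) (fun _ => y))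
      (iteratedFDeriv ℝ (n + 1) f (x + t • y) (fun _ => y)) t := by
  have hD : Differentiable ℝ (iteratedFDeriv ℝ n f) :=
    hf.differentiable_iteratedFDeriv (mod_cast Nat.lt_succ_self n)
  have hd : DifferentiableAt ℝ (fun s : ℝ => iteratedFDeriv ℝ n f (x + s • y) (fun _ => y)) t := by
    fun_prop
  rw [← hf.contDiffAt.deriv_fderiv_add_smul]
  exact hd.hasDerivAt

theorem norm_iteratedFDeriv_apply_const_le (n : ℕ) (x y : E) :
    ‖iteratedFDeriv ℝ n f x (fun _ => y)‖ ≤ ‖iteratedFDeriv ℝ n f x‖ * ‖y‖ ^ n :=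
  (iteratedFDeriv ℝ n f x).le_opNorm_mul_pow_of_le (pi_norm_const_le y)

theorem taylor_le_of_selfBounding {Φ : E → ℝ} {ρ ρ₁ ρ₂ ρ₃ θ : ℝ → ℝ} {p : ℝ} (hp : 0 ≤ p)
    (hΦnn : ∀ w, 0 ≤ Φ w) (hΦ : ContDiff ℝ 3 Φ)
    (hd1 : ∀ w, ‖iteratedFDeriv ℝ 1 Φ w‖ ≤ ρ₁ (Φ w))
    (hd2 : ∀ w, ‖iteratedFDeriv ℝ 2 Φ w‖ ≤ ρ₂ (Φ w))
    (hd3 : ∀ w, ‖iteratedFDeriv ℝ 3 Φ w‖ ≤ ρ₃ (Φ w))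
    (hρ : ∀ z, 0 ≤ z → 0 < ρ z) (hρ' : ∀ z, 0 ≤ z → HasDerivAt ρ (p * ρ z / (z + 1)) z)
    (hρ₁ : ∀ z, 0 ≤ z → ρ₁ z ^ 3 ≤ ρ z) (hρ₁₂ : ∀ z, 0 ≤ z → ρ₁ z * ρ₂ z ≤ ρ z)
    (hρ₃ : ∀ z, 0 ≤ z → ρ₃ z ≤ ρ z) (hθ : ∀ z, 0 ≤ z → HasDerivAt θ (1 / ρ z) z) (w u : E) :
    θ (Φ (w + u)) ≤ θ (Φ w) + 1 / ρ (Φ w) * iteratedFDeriv ℝ 1 Φ w (fun _ => u)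
      + 1 / 2 * (1 / ρ (Φ w)) * iteratedFDeriv ℝ 2 Φ w (fun _ => u)
      + (p ^ 2 + 4 * p + 1) / 6 * ‖u‖ ^ 3 := by
  set D : ℕ → ℝ → ℝ := fun k t => iteratedFDeriv ℝ k Φ (w + t • u) (fun _ => u)
  have hD (k : ℕ) (hk : k + 1 ≤ 3) (t : ℝ) : HasDerivAt (D k) (D (k + 1) t) t :=
    (hΦ.of_le (mod_cast hk)).hasDerivAt_iteratedFDeriv_add_smul w u t
  have hD₀ : D 0 = fun t => Φ (w + t • u) := funext fun t => iteratedFDeriv_zero_apply _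
  have hD_le (k : ℕ) (r : ℝ → ℝ) (hr : ∀ x, ‖iteratedFDeriv ℝ k Φ x‖ ≤ r (Φ x)) (t : ℝ) :
      |D k t| ≤ r (Φ (w + t • u)) * ‖u‖ ^ k :=
    (norm_iteratedFDeriv_apply_const_le k _ u).trans
      (mul_le_mul_of_nonneg_right (hr _) (by positivity))
  have hΦ₁ (x : E) : Φ x + 1 ≠ 0 := by linarith [hΦnn x]
  have key := taylor_comp_third_order_le (φ := θ) (φ₁ := fun z => 1 / ρ z)
    (φ₂ := fun z => -p / ((z + 1) * ρ z)) (φ₃ := fun z => p * (p + 1) / ((z + 1) ^ 2 * ρ z))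
    (g := fun t => Φ (w + t • u)) (M := (p ^ 2 + 4 * p + 1) * ‖u‖ ^ 3)
    (fun t _ => hθ _ (hΦnn _))
    (fun t _ => hasDerivAt_one_div_of_logDeriv (hρ' _ (hΦnn _)) (hρ _ (hΦnn _)).ne' (hΦ₁ _))
    (fun t _ => hasDerivAt_neg_div_mul_of_logDeriv (hρ' _ (hΦnn _)) (hρ _ (hΦnn _)).ne' (hΦ₁ _))
    (fun t _ => hD₀ ▸ hD 0 (by norm_num) t) (fun t _ => hD 1 (by norm_num) t)
    (fun t _ => hD 2 (by norm_num) t)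
    (fun t _ => weighted_third_order_le (hρ _ (hΦnn _)) hp (hΦnn _) (norm_nonneg u)
      ((norm_nonneg _).trans (hd1 _)) (by simpa using hD_le 1 ρ₁ hd1 t) (hD_le 2 ρ₂ hd2 t)
      (hD_le 3 ρ₃ hd3 t) (hρ₁ _ (hΦnn _)) (hρ₁₂ _ (hΦnn _)) (hρ₃ _ (hΦnn _)))
  have hdrop : -p / ((Φ w + 1) * ρ (Φ w)) * D 1 0 ^ 2 ≤ 0 :=
    mul_nonpos_of_nonpos_of_nonneg (div_nonpos_of_nonpos_of_nonneg (by linarith)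
      (mul_pos (by linarith [hΦnn w]) (hρ _ (hΦnn w))).le) (sq_nonneg _)
  simp only [D, one_smul, zero_smul, add_zero] at key hdrop
  linarith

end IteratedFDerivLine

theorem stmt_14_general (d : ℕ) (Φ : EuclideanSpace ℝ (Fin d) → ℝ)
    (A p : ℝ) (hA : 0 < A) (hp : 0 ≤ p)
    (hΦnn : ∀ w, 0 ≤ Φ w) (hΦ : ContDiff ℝ 3 Φ)
    (ρ₁ ρ₂ ρ₃ ρ θ : ℝ → ℝ)
    (hd1 : ∀ w, ‖iteratedFDeriv ℝ 1 Φ w‖ ≤ ρ₁ (Φ w))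
    (hd2 : ∀ w, ‖iteratedFDeriv ℝ 2 Φ w‖ ≤ ρ₂ (Φ w))
    (hd3 : ∀ w, ‖iteratedFDeriv ℝ 3 Φ w‖ ≤ ρ₃ (Φ w))
    (hρ : ∀ z, ρ z = 2 * A * (z + 1) ^ p)
    (hdom : ∀ z, 0 ≤ z →
      max (max (max (ρ₁ z) ((ρ₁ z) ^ 3)) (max (ρ₂ z) (ρ₃ z))) (ρ₁ z * ρ₂ z) ≤ ρ z)
    (hθ' : ∀ z, 0 ≤ z → HasDerivAt θ (1 / ρ z) z) :
    ∀ w u : EuclideanSpace ℝ (Fin d),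
      θ (Φ (w + u)) ≤
        θ (Φ w) + (1 / ρ (Φ w)) * (inner ℝ (gradient Φ w) u : ℝ)
          + (1 / 2) * (1 / ρ (Φ w)) * (iteratedFDeriv ℝ 2 Φ w ![u, u])
          + ((p ^ 2 + 4 * p + 1) / 6) * ‖u‖ ^ 3 := by
  intro w u
  simp only [max_le_iff] at hdom
  have hρ' (z : ℝ) (hz : 0 ≤ z) : HasDerivAt ρ (p * ρ z / (z + 1)) z := by
    rw [show ρ = fun z => 2 * A * (z + 1) ^ p from funext hρ]
    exact hasDerivAt_const_mul_add_one_rpow _ _ (by linarith)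
  have h := taylor_le_of_selfBounding hp hΦnn hΦ hd1 hd2 hd3
    (fun z hz => by rw [hρ]; positivity) hρ' (fun z hz => (hdom z hz).1.1.2)
    (fun z hz => (hdom z hz).2) (fun z hz => (hdom z hz).1.2.2) hθ' w u
  have hD₂ : ![u, u] = fun _ => u := by
    ext i
    fin_cases i <;> rfl
  rwa [iteratedFDeriv_one_apply, ← inner_gradient_left, ← hD₂] at h

/-- Lemma on third-order expansion under self-bounding regularity: if `Φ ≥ 0` is
`C³` with `‖∇^kΦ(w)‖_op ≤ ρ_k(Φ(w))` for `k = 1,2,3`, `ρ(z) = 2A(z+1)^p`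
dominates `ρ₁, ρ₁³, ρ₂, ρ₃, ρ₁ρ₂` on `[0,∞)`, and `θ` is the antiderivative of
`1/ρ` with `θ(0) = 0`, then for all `w, u`:
`θ(Φ(w+u)) ≤ θ(Φ(w)) + θ'(Φ(w))⟨∇Φ(w),u⟩ + (1/2)θ'(Φ(w))⟨∇²Φ(w)u,u⟩ + (C/6)‖u‖³`
with `C = p² + 4p + 1`. -/
theorem stmt_14 (d : ℕ) (Φ : EuclideanSpace ℝ (Fin d) → ℝ)
    (A p : ℝ) (hA : 0 < A) (hp : 0 ≤ p)
    (hΦnn : ∀ w, 0 ≤ Φ w) (hΦ : ContDiff ℝ 3 Φ)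
    (ρ₁ ρ₂ ρ₃ ρ θ : ℝ → ℝ)
    (hρ₁mono : MonotoneOn ρ₁ (Set.Ici 0))
    (hρ₂mono : MonotoneOn ρ₂ (Set.Ici 0))
    (hρ₃mono : MonotoneOn ρ₃ (Set.Ici 0))
    (hd1 : ∀ w, ‖iteratedFDeriv ℝ 1 Φ w‖ ≤ ρ₁ (Φ w))
    (hd2 : ∀ w, ‖iteratedFDeriv ℝ 2 Φ w‖ ≤ ρ₂ (Φ w))
    (hd3 : ∀ w, ‖iteratedFDeriv ℝ 3 Φ w‖ ≤ ρ₃ (Φ w))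
    (hρ : ∀ z, ρ z = 2 * A * (z + 1) ^ p)
    (hdom : ∀ z, 0 ≤ z →
      max (max (max (ρ₁ z) ((ρ₁ z) ^ 3)) (max (ρ₂ z) (ρ₃ z))) (ρ₁ z * ρ₂ z) ≤ ρ z)
    (hθ0 : θ 0 = 0)
    (hθ' : ∀ z, 0 ≤ z → HasDerivAt θ (1 / ρ z) z) :
    ∀ w u : EuclideanSpace ℝ (Fin d),
      θ (Φ (w + u)) ≤
        θ (Φ w) + (1 / ρ (Φ w)) * (inner ℝ (gradient Φ w) u : ℝ)
          + (1 / 2) * (1 / ρ (Φ w)) * (iteratedFDeriv ℝ 2 Φ w ![u, u])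
          + ((p ^ 2 + 4 * p + 1) / 6) * ‖u‖ ^ 3 :=
  stmt_14_general d Φ A p hA hp hΦnn hΦ ρ₁ ρ₂ ρ₃ ρ θ hd1 hd2 hd3 hρ hdom hθ'
end

section
/- Let Φ : ℝ^d → ℝ be nonnegative and twice differentiable with ‖∇Φ(w)‖ ≤ ρ(Φ(w)) and ‖∇²Φ(w)‖_op ≤ ρ(Φ(w)) for an increasing positive function ρ, and let θ satisfy θ'(z) = 1/ρ(z), θ(0) = 0, θ'' ≤ 0. Then for all w, u ∈ ℝ^d: θ(Φ(w+u)) ≤ θ(Φ(w)) + θ'(Φ(w))⟨∇Φ(w), u⟩ + (1/2)‖u‖². -/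
/-!
Restrict to the segment: with `g t = θ (Φ (w + t • u))`, formally
`g'' = θ''(Φ) (Φ')² + θ'(Φ) Φ'' ≤ Φ'' / ρ(Φ) ≤ ‖u‖²`, and the claim is the Taylor bound
`g 1 ≤ g 0 + g' 0 + ‖u‖² / 2`. As `θ' = 1 / ρ` need not be differentiable, the bound on `g''`
is proved in Dini form: `g' t - ‖u‖² t` is antitone, because in a right difference quotient of
`g' = θ'(Φ) Φ'` the increment of `θ'(Φ)` has the sign opposite to `Φ'` (`θ'` is antitone).
The Dini comparison needs `g'` continuous, which holds since an antitone function with the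
Darboux property, such as the derivative `θ'`, is continuous.
-/

open Set Filter
open scoped Topology

theorem MonotoneOn.eventually_lt_of_ordConnected_image {α β : Type*} [LinearOrder α]
    [TopologicalSpace α] [OrderClosedTopology α] [LinearOrder β] [DenselyOrdered β]
    {f : α → β} {s : Set α} {a : α} {b : β} (hf : MonotoneOn f s)
    (himg : (f '' s).OrdConnected) (ha : a ∈ s) (hb : f a < b) :
    ∀ᶠ z in 𝓝[s] a, f z < b := by
  by_cases hc : ∃ c ∈ s, a < c ∧ f c < b
  · obtain ⟨c, hcs, hac, hcb⟩ := hc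
    filter_upwards [self_mem_nhdsWithin, mem_nhdsWithin_of_mem_nhds (Iio_mem_nhds hac)]
      with z hzs hzc
    exact (hf hzs hcs hzc.le).trans_lt hcb
  push Not at hc
  refine eventually_nhdsWithin_of_forall fun z hz => ?_
  rcases le_or_gt z a with hza | haz
  · exact (hf hz ha hza).trans_lt hb
  -- a jump of `f` at `a` would leave a gap in the image
  obtain ⟨m, ham, hmb⟩ := exists_between hb
  obtain ⟨c, hcs, rfl⟩ := himg.out (mem_image_of_mem f ha) (mem_image_of_mem f hz)
    ⟨ham.le, hmb.le.trans (hc z hz haz)⟩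
  rcases le_or_gt c a with hca | hac
  · exact absurd (hf hcs ha hca) ham.not_ge
  · exact absurd (hc c hcs hac) hmb.not_ge

theorem MonotoneOn.continuousOn_of_ordConnected_image {α β : Type*} [LinearOrder α]
    [TopologicalSpace α] [OrderTopology α] [LinearOrder β] [TopologicalSpace β] [OrderTopology β]
    [DenselyOrdered β] {f : α → β} {s : Set α} (hf : MonotoneOn f s)
    (himg : (f '' s).OrdConnected) : ContinuousOn f s := fun a ha =>
  tendsto_order.2
    ⟨fun _ hb => @MonotoneOn.eventually_lt_of_ordConnected_image αᵒᵈ βᵒᵈ _ _ _ _ _ f s a _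
      hf.dual himg.dual ha hb,
     fun _ hb => hf.eventually_lt_of_ordConnected_image himg ha hb⟩

theorem continuousOn_of_hasDerivWithinAt_of_antitoneOn {f f' : ℝ → ℝ} {s : Set ℝ}
    (hs : s.OrdConnected) (hf : ∀ x ∈ s, HasDerivWithinAt f (f' x) s x)
    (hf' : AntitoneOn f' s) : ContinuousOn f' s :=
  @MonotoneOn.continuousOn_of_ordConnected_image ℝ ℝᵒᵈ _ _ _ _ _ _ _ f' s hf'.dual_right
    (hs.image_hasDerivWithinAt hf).dual

theorem eventually_slope_mul_lt {T h : ℝ → ℝ} {x H r : ℝ} (hT : ContinuousWithinAt T (Ioi x) x)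
    (hh : HasDerivAt h H x) (hsign : ∀ᶠ z in 𝓝[>] x, (T z - T x) * h x ≤ 0)
    (hr : T x * H < r) : ∀ᶠ z in 𝓝[>] x, slope (fun t => T t * h t) x z < r := by
  have hslope : Tendsto (slope h x) (𝓝[>] x) (𝓝 H) :=
    (hasDerivAt_iff_tendsto_slope.1 hh).mono_left (nhdsGT_le_nhdsNE x)
  filter_upwards [(hT.tendsto.mul hslope).eventually (eventually_lt_nhds hr), hsign,
    self_mem_nhdsWithin] with z hlt hz hxz
  have hxz' : 0 < z - x := sub_pos.2 hxz
  calc slope (fun t => T t * h t) x z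
      = T z * slope h x z + (T z - T x) * h x / (z - x) := by
        simp only [slope_def_field]; field_simp; ring
    _ ≤ T z * slope h x z := add_le_of_nonpos_right (div_nonpos_of_nonpos_of_nonneg hz hxz'.le)
    _ < r := hlt

theorem antitone_sub_mul_of_frequently_slope_lt {f : ℝ → ℝ} {c : ℝ} (hf : Continuous f)
    (hslope : ∀ x r, c < r → ∃ᶠ z in 𝓝[>] x, slope f x z < r) :
    Antitone fun t => f t - c * t := by
  intro a b hab
  have := image_le_of_liminf_slope_right_le_deriv_boundary (B := fun t => f a + c * (t - a))
    hf.continuousOn (by simp) (by fun_prop)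
    (fun x _ => ((hasDerivAt_id x).sub_const a |>.const_mul c |>.const_add (f a)
      |>.hasDerivWithinAt.congr_deriv (by simp)))
    (fun x _ r hr => hslope x r hr) ⟨hab, le_rfl⟩
  dsimp only at this ⊢
  linarith

theorem le_add_mul_add_sq_of_antitone_deriv_sub_mul {g g' : ℝ → ℝ} {c a b : ℝ}
    (hg : ∀ t, HasDerivAt g (g' t) t) (hanti : Antitone fun t => g' t - c * t) (hab : a ≤ b) :
    g b ≤ g a + g' a * (b - a) + c / 2 * (b - a) ^ 2 := by
  rcases hab.eq_or_lt with rfl | hab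
  · simp
  have hk : ∀ t, HasDerivAt (fun t => g t - c / 2 * t ^ 2) (g' t - c * t) t := fun t =>
    ((hg t).sub ((hasDerivAt_pow 2 t).const_mul (c / 2))).congr_deriv (by ring)
  obtain ⟨ξ, hξ, hξeq⟩ := exists_hasDerivAt_eq_slope _ _ hab
    (fun t _ => (hk t).continuousAt.continuousWithinAt) (fun t _ => hk t)
  have hle : (g b - c / 2 * b ^ 2 - (g a - c / 2 * a ^ 2)) / (b - a) ≤ g' a - c * a :=
    hξeq ▸ hanti hξ.1.le
  rw [div_le_iff₀ (sub_pos.2 hab)] at hle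
  linear_combination hle

theorem antitone_mul_deriv_sub_mul {φ h H τ : ℝ → ℝ} {c : ℝ} (hφ : ∀ t, HasDerivAt φ (h t) t)
    (hh : ∀ t, HasDerivAt h (H t) t) (hφ_nonneg : ∀ t, 0 ≤ φ t)
    (hτ : ContinuousOn τ (Ici 0)) (hτ_anti : AntitoneOn τ (Ici 0))
    (hbound : ∀ t, τ (φ t) * H t ≤ c) :
    Antitone fun t => τ (φ t) * h t - c * t := by
  have hφc : Continuous φ := continuous_iff_continuousAt.2 fun t => (hφ t).continuousAt
  have hhc : Continuous h := continuous_iff_continuousAt.2 fun t => (hh t).continuousAt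
  have hTc : Continuous fun t => τ (φ t) := hτ.comp_continuous hφc hφ_nonneg
  refine antitone_sub_mul_of_frequently_slope_lt (hTc.mul hhc) fun x r hr => ?_
  refine (eventually_slope_mul_lt hTc.continuousWithinAt (hh x) ?_
    ((hbound x).trans_lt hr)).frequently
  have hslope : Tendsto (slope φ x) (𝓝[>] x) (𝓝 (h x)) :=
    (hasDerivAt_iff_tendsto_slope.1 (hφ x)).mono_left (nhdsGT_le_nhdsNE x)
  rcases lt_trichotomy (h x) 0 with hneg | hzero | hpos
  · filter_upwards [hslope.eventually (eventually_lt_nhds hneg), self_mem_nhdsWithin]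
      with z hz hxz
    refine mul_nonpos_of_nonneg_of_nonpos (sub_nonneg.2 ?_) hneg.le
    exact hτ_anti (hφ_nonneg z) (hφ_nonneg x) ((slope_neg_iff_of_le hxz.le).1 hz).le
  · simp [hzero]
  · filter_upwards [hslope.eventually (eventually_gt_nhds hpos), self_mem_nhdsWithin]
      with z hz hxz
    refine mul_nonpos_of_nonpos_of_nonneg (sub_nonpos.2 ?_) hpos.le
    exact hτ_anti (hφ_nonneg x) (hφ_nonneg z) ((slope_pos_iff_of_le hxz.le).1 hz).le

section LineRestriction

variable {E F : Type*} [NormedAddCommGroup E] [NormedSpace ℝ E] [NormedAddCommGroup F]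
  [NormedSpace ℝ F] {w u : E} {t : ℝ}

theorem hasDerivAt_comp_add_smul {Φ : E → F} (hΦ : DifferentiableAt ℝ Φ (w + t • u)) :
    HasDerivAt (fun s => Φ (w + s • u)) (fderiv ℝ Φ (w + t • u) u) t :=
  hΦ.hasFDerivAt.comp_hasDerivAt t (((hasDerivAt_id t).smul_const u).const_add w |>.congr_deriv
    (one_smul ℝ u))

theorem hasDerivAt_fderiv_comp_add_smul {Φ : E → ℝ}
    (hΦ : DifferentiableAt ℝ (fderiv ℝ Φ) (w + t • u)) :
    HasDerivAt (fun s => fderiv ℝ Φ (w + s • u) u)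
      (iteratedFDeriv ℝ 2 Φ (w + t • u) fun _ => u) t := by
  rw [iteratedFDeriv_two_apply]
  exact (hasDerivAt_comp_add_smul hΦ).clm_apply (hasDerivAt_const t u) |>.congr_deriv (by simp)

end LineRestriction

theorem stmt_15_general (d : ℕ) (Φ : EuclideanSpace ℝ (Fin d) → ℝ)
    (hΦnn : ∀ w, 0 ≤ Φ w) (hΦ : ContDiff ℝ 2 Φ)
    (ρ θ : ℝ → ℝ)
    (hρpos : ∀ z, 0 ≤ z → 0 < ρ z)
    (hd2 : ∀ w, ‖iteratedFDeriv ℝ 2 Φ w‖ ≤ ρ (Φ w))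
    (hθ' : ∀ z, 0 ≤ z → HasDerivAt θ (1 / ρ z) z)
    (hconc : ∀ z₁ z₂, 0 ≤ z₁ → z₁ ≤ z₂ → 1 / ρ z₂ ≤ 1 / ρ z₁) :
    ∀ w u : EuclideanSpace ℝ (Fin d),
      θ (Φ (w + u)) ≤
        θ (Φ w) + (1 / ρ (Φ w)) * (inner ℝ (gradient Φ w) u : ℝ)
          + (1 / 2) * ‖u‖ ^ 2 := by
  intro w u
  have hτ_anti : AntitoneOn (fun z => 1 / ρ z) (Ici 0) := fun a ha b _ hab => hconc a b ha hab
  have hτ : ContinuousOn (fun z => 1 / ρ z) (Ici 0) :=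
    continuousOn_of_hasDerivWithinAt_of_antitoneOn ordConnected_Ici
      (fun z hz => (hθ' z hz).hasDerivWithinAt) hτ_anti
  have hφ (t : ℝ) := hasDerivAt_comp_add_smul (w := w) (u := u) (t := t)
    (hΦ.differentiable two_ne_zero _)
  have hh (t : ℝ) := hasDerivAt_fderiv_comp_add_smul (w := w) (u := u) (t := t)
    ((hΦ.fderiv_right (by norm_num)).differentiable one_ne_zero _)
  have hbound (t : ℝ) :
      1 / ρ (Φ (w + t • u)) * iteratedFDeriv ℝ 2 Φ (w + t • u) (fun _ => u) ≤ ‖u‖ ^ 2 := by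
    have hρ := hρpos _ (hΦnn (w + t • u))
    rw [one_div_mul_eq_div, div_le_iff₀ hρ]
    calc iteratedFDeriv ℝ 2 Φ (w + t • u) (fun _ => u)
        ≤ ‖iteratedFDeriv ℝ 2 Φ (w + t • u)‖ * ‖u‖ ^ 2 :=
          (Real.le_norm_self _).trans ((iteratedFDeriv ℝ 2 Φ _).le_opNorm_mul_pow_of_le
            ((pi_norm_le_iff_of_nonneg (norm_nonneg u)).2 fun _ => le_rfl))
      _ ≤ ‖u‖ ^ 2 * ρ (Φ (w + t • u)) := by rw [mul_comm]; gcongr; exact hd2 _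
  have := le_add_mul_add_sq_of_antitone_deriv_sub_mul (fun t => (hθ' _ (hΦnn _)).comp t (hφ t))
    (antitone_mul_deriv_sub_mul hφ hh (fun _ => hΦnn _) hτ hτ_anti hbound) zero_le_one
  simp only [Function.comp_apply, zero_smul, one_smul, add_zero, sub_zero, one_pow, mul_one] at this
  rw [inner_gradient_left]
  linarith

/-- Second-order variant: if `Φ ≥ 0` is `C²` with `‖∇Φ(w)‖ ≤ ρ(Φ(w))` and
`‖∇²Φ(w)‖_op ≤ ρ(Φ(w))` for an increasing positive `ρ`, and `θ` is concave with
`θ' = 1/ρ`, `θ(0) = 0`, then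
`θ(Φ(w+u)) ≤ θ(Φ(w)) + θ'(Φ(w))⟨∇Φ(w),u⟩ + (1/2)‖u‖²`. -/
theorem stmt_15 (d : ℕ) (Φ : EuclideanSpace ℝ (Fin d) → ℝ)
    (hΦnn : ∀ w, 0 ≤ Φ w) (hΦ : ContDiff ℝ 2 Φ)
    (ρ θ : ℝ → ℝ)
    (hρpos : ∀ z, 0 ≤ z → 0 < ρ z)
    (hρmono : MonotoneOn ρ (Set.Ici 0))
    (hd1 : ∀ w, ‖gradient Φ w‖ ≤ ρ (Φ w))
    (hd2 : ∀ w, ‖iteratedFDeriv ℝ 2 Φ w‖ ≤ ρ (Φ w))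
    (hθ0 : θ 0 = 0)
    (hθ' : ∀ z, 0 ≤ z → HasDerivAt θ (1 / ρ z) z)
    (hconc : ∀ z₁ z₂, 0 ≤ z₁ → z₁ ≤ z₂ → 1 / ρ z₂ ≤ 1 / ρ z₁) :
    ∀ w u : EuclideanSpace ℝ (Fin d),
      θ (Φ (w + u)) ≤
        θ (Φ w) + (1 / ρ (Φ w)) * (inner ℝ (gradient Φ w) u : ℝ)
          + (1 / 2) * ‖u‖ ^ 2 :=
  stmt_15_general d Φ hΦnn hΦ ρ θ hρpos hd2 hθ' hconc
end
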